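/- arXiv:2602.08464 — 4 statements merged into one kernel-verified Lean document; each statement's English description precedes it below -/
import Mathlib

section
/- Inversion of the Pauli-Lindblad parameter/eigenvalue relation: let λ : V → ℝ and define f : V → ℝ by f_a = exp(−2 Σ_{k ∈ V} λ_k·⟨a,k⟩_ℤ). Then for every a ∈ V with a ≠ 0 one has λ_a = 4^{-n} Σ_{k ∈ V, k ≠ 0} χ(a,k)·Real.log(f_k). -/
/-- Index set of `n`-qubit Pauli words. -/
abbrev V (n : ℕ) : Type := (Fin n → ZMod 2) × (Fin n → ZMod 2)

/-- Symplectic inner product `⟨a,b⟩ = Σᵢ (aₓᵢ·b_zᵢ + a_zᵢ·bₓᵢ) ∈ ZMod 2`. -/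
def sform {n : ℕ} (a b : V n) : ZMod 2 := ∑ i, (a.1 i * b.2 i + a.2 i * b.1 i)

/-- The sign `χ(a,b) = (−1)^⟨a,b⟩ ∈ ℝ`. -/
noncomputable def chi {n : ℕ} (a b : V n) : ℝ := (-1 : ℝ) ^ (sform a b).val

/-- Integer (real-valued) lift `⟨a,b⟩_ℤ ∈ {0,1} ⊂ ℝ`. -/
noncomputable def sformZ {n : ℕ} (a b : V n) : ℝ := ((sform a b).val : ℝ)

/-!
Since `⟨a,b⟩_ℤ = (1 - χ(a,b)) / 2`, the relation reads `log f_k = Σ_j λ_j (χ(j,k) - 1)`, i.e. `log f`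
is the (Walsh–)Fourier transform of `λ` up to the constant `-Σ_j λ_j`. The characters `χ(c, ·)` are
orthogonal: `Σ_k χ(c,k)` is `4^n` for `c = 0` and vanishes otherwise, because the symplectic form is
nondegenerate and translating `k` by some `b` with `⟨c,b⟩ = 1` flips the sign of every term. Pairing
`log f` with `χ(a, ·)` for `a ≠ 0` therefore kills the constant and returns `4^n λ_a`; the term `k = 0`
may be dropped since `f_0 = 1`.
-/

open Finset

lemma ZMod.neg_one_pow_val_add {R : Type*} [Ring R] (x y : ZMod 2) :
    (-1 : R) ^ (x + y).val = (-1) ^ x.val * (-1) ^ y.val := by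
  rw [← pow_add, ZMod.val_add, ← neg_one_pow_eq_pow_mod_two]

namespace V

variable {n : ℕ}

lemma neg_eq (v : V n) : -v = v :=
  Prod.ext (funext fun _ => ZMod.neg_eq_self_mod_two _) (funext fun _ => ZMod.neg_eq_self_mod_two _)

lemma add_eq_zero_iff (v w : V n) : v + w = 0 ↔ v = w := by
  rw [add_eq_zero_iff_eq_neg, neg_eq]

lemma card : (Fintype.card (V n) : ℝ) = 4 ^ n := by
  simp only [Fintype.card_prod, Fintype.card_fun, ZMod.card, Fintype.card_fin]
  push_cast
  rw [← mul_pow]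
  norm_num

end V

section Symplectic

variable {n : ℕ}

lemma sform_comm (a b : V n) : sform a b = sform b a :=
  sum_congr rfl fun _ _ => by ring

lemma sform_add_left (a b c : V n) : sform (a + b) c = sform a c + sform b c := by
  simp only [sform, ← sum_add_distrib, Prod.fst_add, Prod.snd_add, Pi.add_apply]
  exact sum_congr rfl fun _ _ => by ring

lemma exists_sform_eq_one {c : V n} (hc : c ≠ 0) : ∃ b : V n, sform c b = 1 := by
  have eq_one : ∀ x : ZMod 2, x ≠ 0 → x = 1 := by decide
  obtain ⟨i, hi⟩ | ⟨i, hi⟩ : (∃ i, c.1 i ≠ 0) ∨ (∃ i, c.2 i ≠ 0) := by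
    by_contra! h
    exact hc (Prod.ext (funext h.1) (funext h.2))
  · refine ⟨(0, Pi.single i 1), ?_⟩
    rw [sform, sum_eq_single i (fun j _ hj => by simp [hj]) (by simp)]
    simp [eq_one _ hi]
  · refine ⟨(Pi.single i 1, 0), ?_⟩
    rw [sform, sum_eq_single i (fun j _ hj => by simp [hj]) (by simp)]
    simp [eq_one _ hi]

end Symplectic

section Characters

variable {n : ℕ}

lemma chi_comm (a b : V n) : chi a b = chi b a := by
  rw [chi, sform_comm, chi]

lemma chi_add_left (a b c : V n) : chi (a + b) c = chi a c * chi b c := by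
  rw [chi, sform_add_left, ZMod.neg_one_pow_val_add, chi, chi]

lemma chi_add_right (a b c : V n) : chi a (b + c) = chi a b * chi a c := by
  rw [chi_comm, chi_add_left, chi_comm b, chi_comm c]

@[simp]
lemma chi_zero_right (a : V n) : chi a 0 = 1 := by
  simp [chi, sform]

@[simp]
lemma chi_zero_left (a : V n) : chi 0 a = 1 := by
  rw [chi_comm, chi_zero_right]

lemma sformZ_eq_one_sub_chi_div_two (a b : V n) : sformZ a b = (1 - chi a b) / 2 := by
  obtain h | h : sform a b = 0 ∨ sform a b = 1 := by generalize sform a b = x; decide +revert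
  all_goals simp only [sformZ, chi, h, ZMod.val_zero, ZMod.val_one]; norm_num

lemma sum_chi (c : V n) : ∑ k : V n, chi c k = if c = 0 then 4 ^ n else 0 := by
  split_ifs with hc
  · simp only [hc, chi_zero_left, sum_const, card_univ, nsmul_eq_mul, mul_one, V.card]
  obtain ⟨b, hb⟩ := exists_sform_eq_one hc
  have flip : ∀ k, chi c (k + b) = -chi c k := fun k => by
    rw [chi_add_right, show chi c b = -1 by simp [chi, hb, ZMod.val_one], mul_neg_one]
  have shift : ∑ k, chi c (k + b) = ∑ k, chi c k :=
    Fintype.sum_equiv (Equiv.addRight b) _ _ fun _ => rfl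
  simp only [flip, sum_neg_distrib] at shift
  linarith

end Characters

theorem pauli_lindblad_parameter_inversion_general (n : ℕ) (lam : V n → ℝ) (f : V n → ℝ)
    (hf : ∀ a : V n, f a = Real.exp (-2 * ∑ k : V n, lam k * sformZ a k))
    (a : V n) (ha : a ≠ 0) :
    lam a = ((4 : ℝ) ^ n)⁻¹ *
      ∑ k ∈ Finset.univ.filter (fun k : V n => k ≠ 0), chi a k * Real.log (f k) := by
  have log_f : ∀ k, Real.log (f k) = ∑ j, lam j * (chi j k - 1) := fun k => by
    rw [hf, Real.log_exp, mul_sum]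
    exact sum_congr rfl fun j _ => by rw [sformZ_eq_one_sub_chi_div_two, chi_comm]; ring
  have drop_zero : ∑ k ∈ univ.filter (· ≠ 0), chi a k * Real.log (f k)
      = ∑ k, chi a k * Real.log (f k) :=
    sum_filter_of_ne fun k _ hk hk0 => hk (by simp [hk0, log_f])
  have pairing : ∑ k, chi a k * Real.log (f k) = ∑ j, lam j * ∑ k, (chi (a + j) k - chi a k) := by
    simp only [log_f, mul_sum, chi_add_left]
    rw [sum_comm]
    exact sum_congr rfl fun j _ => sum_congr rfl fun k _ => by ring
  simp only [drop_zero, pairing, sum_sub_distrib, sum_chi, V.add_eq_zero_iff, if_neg ha, sub_zero,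
    mul_ite, mul_zero, sum_ite_eq, mem_univ, if_true]
  field_simp

theorem pauli_lindblad_parameter_inversion (n : ℕ) (hn : 1 ≤ n) (lam : V n → ℝ) (f : V n → ℝ)
    (hf : ∀ a : V n, f a = Real.exp (-2 * ∑ k : V n, lam k * sformZ a k))
    (a : V n) (ha : a ≠ 0) :
    lam a = ((4 : ℝ) ^ n)⁻¹ *
      ∑ k ∈ Finset.univ.filter (fun k : V n => k ≠ 0), chi a k * Real.log (f k) :=
  pauli_lindblad_parameter_inversion_general n lam f hf a ha
end

section
/- Single-qubit Markovianity criterion: let f_x, f_y, f_z be positive reals. Then there exist nonnegative reals λ_x, λ_y, λ_z with f_x = exp(−2(λ_y + λ_z)), f_y = exp(−2(λ_x + λ_z)), and f_z = exp(−2(λ_x + λ_y)) if and only if f_x ≥ f_y·f_z, f_y ≥ f_x·f_z, and f_z ≥ f_x·f_y. -/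
theorem single_qubit_markovianity_criterion (fx fy fz : ℝ)
    (hfx : 0 < fx) (hfy : 0 < fy) (hfz : 0 < fz) :
    (∃ lx ly lz : ℝ, 0 ≤ lx ∧ 0 ≤ ly ∧ 0 ≤ lz ∧
        fx = Real.exp (-2 * (ly + lz)) ∧
        fy = Real.exp (-2 * (lx + lz)) ∧
        fz = Real.exp (-2 * (lx + ly))) ↔
      (fy * fz ≤ fx ∧ fx * fz ≤ fy ∧ fx * fy ≤ fz) := by
  constructor
  · rintro ⟨lx, ly, lz, hlx, hly, hlz, hx, hy, hz⟩
    subst hx hy hz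
    rw [← Real.exp_add, ← Real.exp_add, ← Real.exp_add]
    refine ⟨Real.exp_le_exp.2 (by linarith), Real.exp_le_exp.2 (by linarith),
      Real.exp_le_exp.2 (by linarith)⟩
  · rintro ⟨h1, h2, h3⟩
    have la : Real.log (fy * fz) ≤ Real.log fx := Real.log_le_log (by positivity) h1
    have lb : Real.log (fx * fz) ≤ Real.log fy := Real.log_le_log (by positivity) h2
    have lc : Real.log (fx * fy) ≤ Real.log fz := Real.log_le_log (by positivity) h3
    rw [Real.log_mul hfy.ne' hfz.ne'] at la
    rw [Real.log_mul hfx.ne' hfz.ne'] at lb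
    rw [Real.log_mul hfx.ne' hfy.ne'] at lc
    set a := Real.log fx
    set b := Real.log fy
    set c := Real.log fz
    refine ⟨(a - b - c)/4, (b - a - c)/4, (c - a - b)/4, by linarith, by linarith,
      by linarith, ?_, ?_, ?_⟩
    · rw [show -2 * ((b - a - c)/4 + (c - a - b)/4) = a by ring, Real.exp_log hfx]
    · rw [show -2 * ((a - b - c)/4 + (c - a - b)/4) = b by ring, Real.exp_log hfy]
    · rw [show -2 * ((a - b - c)/4 + (b - a - c)/4) = c by ring, Real.exp_log hfz]
end

section
/- Pauli twirling breaks channel semigroup Markovianity for Hadamard dephasing: let γ > 0, t > 0, L = (X + Z)/√2, D(ρ) = γ·(L ρ L − ρ), and let f_x, f_y, f_z be the Pauli eigenvalues of exp(t·D). Then the Pauli-Lindblad parameters of the Pauli-twirled channel satisfy λ_x = λ_z = γt/2 and λ_y = −½·Real.log(Real.cosh(γt)); in particular λ_y < 0. -/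
attribute [local instance] Matrix.linftyOpNormedAddCommGroup Matrix.linftyOpNormedRing
  Matrix.linftyOpNormedAlgebra

/-- The space of 2×2 complex matrices. -/
abbrev M2 : Type := Matrix (Fin 2) (Fin 2) ℂ

def Xm : M2 := !![0, 1; 1, 0]
def Ym : M2 := !![0, -Complex.I; Complex.I, 0]
def Zm : M2 := !![1, 0; 0, -1]

/-- The Hadamard jump operator `L_φ = (X + Z)/√2`. -/
noncomputable def Lφ : M2 := ((Real.sqrt 2 : ℝ) : ℂ)⁻¹ • (Xm + Zm)

/-- Porting aid: the operator-norm topological-ring structure on `M2 →L[ℂ] M2` (found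
automatically by the older library) is no longer found by instance search. -/
instance instIsTopologicalRingM2CLM : IsTopologicalRing (M2 →L[ℂ] M2) :=
  let h : IsTopologicalRing (@ContinuousLinearMap ℂ ℂ _ _ (RingHom.id ℂ) M2
    (PseudoMetricSpace.toUniformSpace.toTopologicalSpace) _ M2
    (PseudoMetricSpace.toUniformSpace.toTopologicalSpace) _ _ _) := inferInstance
  h

/-!
Conjugation by `Lφ` swaps `X` and `Z` and negates `Y`, so `X + Z`, `X - Z` and `Y` are
eigenvectors of the dissipator `D` with eigenvalues `0`, `-2γ`, `-2γ`. Hence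
`f_y = e^{-2γt}` and `f_x = f_z = (1 + e^{-2γt})/2 = e^{-γt} cosh(γt)`, and the Pauli-Lindblad
parameters follow by taking logarithms; `λ_y < 0` because `cosh(γt) > 1`.
-/

theorem NormedSpace.exp_apply_of_apply_eq_smul {𝕂 E : Type*} [RCLike 𝕂] [NormedAddCommGroup E]
    [NormedSpace 𝕂 E] [CompleteSpace E] {A : E →L[𝕂] E} {v : E} {c : 𝕂} (h : A v = c • v) :
    NormedSpace.exp A v = NormedSpace.exp c • v := by
  have hpow (n : ℕ) : (A ^ n) v = c ^ n • v := by
    induction n with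
    | zero => simp
    | succ n ih => rw [pow_succ', mul_apply_eq_comp, ih, map_smul, h, smul_smul, pow_succ]
  have hA :=
    (NormedSpace.exp_series_hasSum_exp' (𝕂 := 𝕂) A).mapL (ContinuousLinearMap.apply 𝕂 E v)
  have hc := (NormedSpace.exp_series_hasSum_exp' (𝕂 := 𝕂) c).smul_const v
  simp only [ContinuousLinearMap.apply_apply, smul_apply, hpow, smul_smul] at hA
  exact hA.unique hc

theorem NormedSpace.exp_real_smul_apply_of_apply_eq_smul {E : Type*} [NormedAddCommGroup E]
    [NormedSpace ℂ E] [CompleteSpace E] {A : E →L[ℂ] E} {v : E} {c : ℂ} (h : A v = c • v)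
    (t : ℝ) : NormedSpace.exp (t • A) v = Complex.exp (t * c) • v := by
  rw [Complex.exp_eq_exp_ℂ]
  refine NormedSpace.exp_apply_of_apply_eq_smul ?_
  rw [smul_apply, h, ← Complex.coe_smul, smul_smul]

theorem Xm_mul_Xm : Xm * Xm = 1 := by
  ext i j; fin_cases i <;> fin_cases j <;> simp [Xm]

theorem Ym_mul_Ym : Ym * Ym = 1 := by
  ext i j; fin_cases i <;> fin_cases j <;> simp [Ym]

theorem Zm_mul_Zm : Zm * Zm = 1 := by
  ext i j; fin_cases i <;> fin_cases j <;> simp [Zm]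

theorem trace_Xm_mul_Zm : (Xm * Zm).trace = 0 := by
  simp [Xm, Zm, Matrix.trace_fin_two]

theorem Lφ_mul_mul_Lφ (M : M2) : Lφ * M * Lφ = (2 : ℂ)⁻¹ • ((Xm + Zm) * M * (Xm + Zm)) := by
  have hsqrt : ((Real.sqrt 2 : ℝ) : ℂ)⁻¹ * ((Real.sqrt 2 : ℝ) : ℂ)⁻¹ = (2 : ℂ)⁻¹ := by
    rw [← mul_inv, ← Complex.ofReal_mul, Real.mul_self_sqrt zero_le_two, Complex.ofReal_ofNat]
  simp only [Lφ, smul_mul_assoc, mul_smul_comm, smul_smul, hsqrt]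

theorem Lφ_mul_Xm_mul_Lφ : Lφ * Xm * Lφ = Zm := by
  rw [Lφ_mul_mul_Lφ]
  ext i j; fin_cases i <;> fin_cases j <;> simp [Xm, Zm] <;> norm_num

theorem Lφ_mul_Zm_mul_Lφ : Lφ * Zm * Lφ = Xm := by
  rw [Lφ_mul_mul_Lφ]
  ext i j; fin_cases i <;> fin_cases j <;> simp [Xm, Zm] <;> norm_num

theorem Lφ_mul_Ym_mul_Lφ : Lφ * Ym * Lφ = -Ym := by
  rw [Lφ_mul_mul_Lφ]
  ext i j; fin_cases i <;> fin_cases j <;> simp [Xm, Ym, Zm] <;> ring_nf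

def IsHadamardDephasing (γ : ℝ) (D : M2 →L[ℂ] M2) : Prop :=
  ∀ ρ : M2, D ρ = (γ : ℂ) • (Lφ * ρ * Lφ - ρ)

namespace IsHadamardDephasing

variable {γ : ℝ} {D : M2 →L[ℂ] M2}

theorem apply_Xm_add_Zm (hD : IsHadamardDephasing γ D) : D (Xm + Zm) = 0 := by
  rw [hD _, mul_add, add_mul, Lφ_mul_Xm_mul_Lφ, Lφ_mul_Zm_mul_Lφ, add_comm, sub_self, smul_zero]

theorem apply_Xm_sub_Zm (hD : IsHadamardDephasing γ D) :
    D (Xm - Zm) = (-2 * γ : ℂ) • (Xm - Zm) := by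
  rw [hD _, mul_sub, sub_mul, Lφ_mul_Xm_mul_Lφ, Lφ_mul_Zm_mul_Lφ]
  module

theorem apply_Ym (hD : IsHadamardDephasing γ D) : D Ym = (-2 * γ : ℂ) • Ym := by
  rw [hD _, Lφ_mul_Ym_mul_Lφ]
  module

theorem exp_smul_apply_Xm_add_Zm (hD : IsHadamardDephasing γ D) (t : ℝ) :
    NormedSpace.exp (t • D) (Xm + Zm) = Xm + Zm := by
  -- not `rw`: the two topologies on `M2 →L[ℂ] M2` (entrywise, operator norm) agree only up to
  -- unfolding
  refine (NormedSpace.exp_real_smul_apply_of_apply_eq_smul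
    (hD.apply_Xm_add_Zm.trans (zero_smul ℂ _).symm) t).trans ?_
  rw [mul_zero, Complex.exp_zero, one_smul]

theorem exp_smul_apply_Xm_sub_Zm (hD : IsHadamardDephasing γ D) (t : ℝ) :
    NormedSpace.exp (t • D) (Xm - Zm) = (Real.exp (-2 * (γ * t)) : ℂ) • (Xm - Zm) := by
  refine (NormedSpace.exp_real_smul_apply_of_apply_eq_smul hD.apply_Xm_sub_Zm t).trans ?_
  push_cast
  congr 2
  ring

theorem exp_smul_apply_Ym (hD : IsHadamardDephasing γ D) (t : ℝ) :
    NormedSpace.exp (t • D) Ym = (Real.exp (-2 * (γ * t)) : ℂ) • Ym := by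
  refine (NormedSpace.exp_real_smul_apply_of_apply_eq_smul hD.apply_Ym t).trans ?_
  push_cast
  congr 2
  ring

theorem pauliEigenvalue_X (hD : IsHadamardDephasing γ D) (t : ℝ) :
    (1 / 2 : ℂ) * (Xm * NormedSpace.exp (t • D) Xm).trace
      = ((1 + Real.exp (-2 * (γ * t))) / 2 : ℝ) := by
  have hexp : NormedSpace.exp (t • D) Xm
      = (2 : ℂ)⁻¹ • ((Xm + Zm) + (Real.exp (-2 * (γ * t)) : ℂ) • (Xm - Zm)) := by
    rw [← hD.exp_smul_apply_Xm_add_Zm t, ← hD.exp_smul_apply_Xm_sub_Zm t, ← map_add, ← map_smul]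
    congr 1
    module
  simp [hexp, mul_add, mul_sub, Xm_mul_Xm, trace_Xm_mul_Zm, Matrix.trace_add, Matrix.trace_sub]
  ring

theorem pauliEigenvalue_Z (hD : IsHadamardDephasing γ D) (t : ℝ) :
    (1 / 2 : ℂ) * (Zm * NormedSpace.exp (t • D) Zm).trace
      = ((1 + Real.exp (-2 * (γ * t))) / 2 : ℝ) := by
  have hexp : NormedSpace.exp (t • D) Zm
      = (2 : ℂ)⁻¹ • ((Xm + Zm) - (Real.exp (-2 * (γ * t)) : ℂ) • (Xm - Zm)) := by
    rw [← hD.exp_smul_apply_Xm_add_Zm t, ← hD.exp_smul_apply_Xm_sub_Zm t, ← map_sub, ← map_smul]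
    congr 1
    module
  simp [hexp, mul_add, mul_sub, Zm_mul_Zm, Matrix.trace_mul_comm Zm Xm, trace_Xm_mul_Zm,
    Matrix.trace_add, Matrix.trace_sub]
  ring

theorem pauliEigenvalue_Y (hD : IsHadamardDephasing γ D) (t : ℝ) :
    (1 / 2 : ℂ) * (Ym * NormedSpace.exp (t • D) Ym).trace = (Real.exp (-2 * (γ * t)) : ℝ) := by
  simp [hD.exp_smul_apply_Ym, Ym_mul_Ym]
  ring

end IsHadamardDephasing

theorem Real.log_one_add_exp_neg_two_mul_div_two (u : ℝ) :
    Real.log ((1 + Real.exp (-2 * u)) / 2) = Real.log (Real.cosh u) - u := by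
  have h : (1 + Real.exp (-2 * u)) / 2 = Real.cosh u * Real.exp (-u) := by
    rw [Real.cosh_eq, div_mul_eq_mul_div, add_mul, ← Real.exp_add, ← Real.exp_add,
      add_neg_cancel, Real.exp_zero]
    ring_nf
  rw [h, Real.log_mul (Real.cosh_pos u).ne' (Real.exp_pos _).ne', Real.log_exp, sub_eq_add_neg]

theorem twirl_breaks_CSM_hadamard_dephasing (γ t : ℝ) (hγ : 0 < γ) (ht : 0 < t)
    (D : M2 →L[ℂ] M2) (hD : ∀ ρ : M2, D ρ = (γ : ℂ) • (Lφ * ρ * Lφ - ρ))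
    (fx fy fz : ℝ)
    (hfx : (fx : ℂ) = (1 / 2 : ℂ) * Matrix.trace (Xm * NormedSpace.exp (t • D) Xm))
    (hfy : (fy : ℂ) = (1 / 2 : ℂ) * Matrix.trace (Ym * NormedSpace.exp (t • D) Ym))
    (hfz : (fz : ℂ) = (1 / 2 : ℂ) * Matrix.trace (Zm * NormedSpace.exp (t • D) Zm)) :
    (1 / 4 : ℝ) * (Real.log fx - Real.log fy - Real.log fz) = γ * t / 2 ∧
    (1 / 4 : ℝ) * (-Real.log fx - Real.log fy + Real.log fz) = γ * t / 2 ∧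
    (1 / 4 : ℝ) * (-Real.log fx + Real.log fy - Real.log fz)
      = -(1 / 2 : ℝ) * Real.log (Real.cosh (γ * t)) ∧
    (1 / 4 : ℝ) * (-Real.log fx + Real.log fy - Real.log fz) < 0 := by
  have hlog_fx : Real.log fx = Real.log (Real.cosh (γ * t)) - γ * t := by
    rw [← Real.log_one_add_exp_neg_two_mul_div_two, ← Complex.ofReal_inj.mp
      (hfx.trans (IsHadamardDephasing.pauliEigenvalue_X hD t))]
  have hlog_fz : Real.log fz = Real.log (Real.cosh (γ * t)) - γ * t := by
    rw [← Real.log_one_add_exp_neg_two_mul_div_two, ← Complex.ofReal_inj.mp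
      (hfz.trans (IsHadamardDephasing.pauliEigenvalue_Z hD t))]
  have hlog_fy : Real.log fy = -2 * (γ * t) := by
    rw [Complex.ofReal_inj.mp (hfy.trans (IsHadamardDephasing.pauliEigenvalue_Y hD t)),
      Real.log_exp]
  have hlog_cosh_pos : 0 < Real.log (Real.cosh (γ * t)) :=
    Real.log_pos (Real.one_lt_cosh.mpr (mul_pos hγ ht).ne')
  rw [hlog_fx, hlog_fy, hlog_fz]
  refine ⟨by ring, by ring, by ring, by linarith⟩
end

section
/- Lower bound on the third Pauli-Lindblad parameter of a qubit Pauli channel with two equal parameters: let ℓ ≥ 0 and λ_y ∈ ℝ, and define f_0 = 1, f_x = f_z = exp(−2(λ_y + ℓ)), f_y = exp(−4ℓ). If the Walsh–Hadamard inverse coefficients p_0 = ¼(1 + f_x + f_y + f_z), p_x = ¼(1 + f_x − f_y − f_z), p_y = ¼(1 − f_x + f_y − f_z), p_z = ¼(1 − f_x − f_y + f_z) are all nonnegative (so that they form a probability distribution), then λ_y ≥ −½·Real.log(Real.cosh(2ℓ)). -/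
theorem third_PL_parameter_lower_bound (ℓ lamy : ℝ) (hℓ : 0 ≤ ℓ)
    (fx fy fz : ℝ)
    (hfx : fx = Real.exp (-2 * (lamy + ℓ)))
    (hfz : fz = Real.exp (-2 * (lamy + ℓ)))
    (hfy : fy = Real.exp (-4 * ℓ))
    (hp0 : 0 ≤ (1 + fx + fy + fz) / 4)
    (hpx : 0 ≤ (1 + fx - fy - fz) / 4)
    (hpy : 0 ≤ (1 - fx + fy - fz) / 4)
    (hpz : 0 ≤ (1 - fx - fy + fz) / 4) :
    -(1 / 2 : ℝ) * Real.log (Real.cosh (2 * ℓ)) ≤ lamy := by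
  have key : Real.exp (-2 * lamy) ≤ Real.cosh (2 * ℓ) := by
    have h1 : (2 : ℝ) * Real.exp (-2 * (lamy + ℓ)) ≤ 1 + Real.exp (-4 * ℓ) := by
      subst hfx hfy hfz; linarith
    have h2 := mul_le_mul_of_nonneg_left h1 (Real.exp_pos (2 * ℓ)).le
    rw [Real.cosh_eq]
    have e1 : Real.exp (2*ℓ) * Real.exp (-2*(lamy+ℓ)) = Real.exp (-2*lamy) := by
      rw [← Real.exp_add]; ring_nf
    have e2 : Real.exp (2*ℓ) * Real.exp (-4*ℓ) = Real.exp (-(2*ℓ)) := by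
      rw [← Real.exp_add]; ring_nf
    nlinarith [h2, e1, e2]
  have hc := Real.cosh_pos (x := 2 * ℓ)
  have := (Real.le_log_iff_exp_le hc).mpr key
  linarith
end
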